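/- Let (u_t) be a d-dimensional martingale difference sequence satisfying E[u_t | u_s, s<t] = 0 and E[(u_t u_τ') ⊗ (u_{τ+k} u_{τ+k}')] = 0 for all τ > t, k > 0. Fix a horizon h ≥ 1 and weights v₁ and matrices Ψ_i, and define e_{t,h} := Σ_{i=0}^{h−1} v₁' Ψ_i u_{t+h−i}. Then the process s_t := (e_{t,h}, e_{t+1,h}, …, e_{t+p−1,h}) ⊗ u_t is serially uncorrelated: E[s_t s_τ'] = 0 for all t ≠ τ. -/

import Mathlib

/-!
Expanding `e_{t+a,h}` and `e_{τ+b,h}` turns every entry of `E[s_t s_τ']` (say `t < τ`) into a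
combination of fourth moments `E[u_{s₁} u_t u_{s₂} u_τ]` with `s₁ > t` and `s₂ > τ`, because
`e_{t,h}` only involves the shocks `u_{t+1}, …, u_{t+h}`. If `s₁ ≠ s₂`, the larger of the two
time indices strictly exceeds the other three, and conditioning on the past of that index kills
the moment by the martingale-difference property. If `s₁ = s₂`, the moment is
`E[(u_t u_τ') ⊗ (u_{τ+k} u_{τ+k}')]` with `k = s₁ - τ > 0`, which vanishes by assumption.
-/

open MeasureTheory Matrix

section General

variable {Ω : Type*}

theorem integrable_of_integrable_pow_four [MeasurableSpace Ω] {μ : Measure Ω} [IsFiniteMeasure μ]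
    {f : Ω → ℝ} (hf : AEStronglyMeasurable f μ) (h4 : Integrable (fun ω => f ω ^ 4) μ) :
    Integrable f μ := by
  have hf4 : MemLp f 4 μ := (integrable_norm_rpow_iff hf (by norm_num) (by norm_num)).1 <| by
    simpa [Real.norm_eq_abs, Even.pow_abs ⟨2, rfl⟩] using h4
  exact hf4.integrable (by norm_num)

theorem integral_mul_eq_zero_of_condExp_eq_zero [mΩ : MeasurableSpace Ω] {μ : Measure Ω}
    [IsFiniteMeasure μ] {m : MeasurableSpace Ω} (hm : m ≤ mΩ) {f g : Ω → ℝ}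
    (hf : StronglyMeasurable[m] f) (hfg : Integrable (f * g) μ) (hg : Integrable g μ)
    (hg_cond : μ[g | m] =ᵐ[μ] 0) :
    ∫ ω, f ω * g ω ∂μ = 0 := calc
  ∫ ω, f ω * g ω ∂μ = ∫ ω, (μ[f * g | m]) ω ∂μ := (integral_condExp hm).symm
  _ = ∫ ω, (f * 0) ω ∂μ :=
    integral_congr_ae ((condExp_mul_of_stronglyMeasurable_left hf hfg hg).trans
      (Filter.EventuallyEq.rfl.mul hg_cond))
  _ = 0 := by simp

abbrev pastSigma {ι β : Type*} [LT ι] [MeasurableSpace β] (u : ι → Ω → β) (t : ι) :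
    MeasurableSpace Ω :=
  ⨆ s : {s : ι // s < t}, MeasurableSpace.comap (u s) inferInstance

variable {ι β : Type*} [LT ι] [MeasurableSpace β] {u : ι → Ω → β}

theorem pastSigma_le [mΩ : MeasurableSpace Ω] (hu : ∀ s, Measurable (u s)) (t : ι) :
    pastSigma u t ≤ mΩ :=
  iSup_le fun s => (hu s).comap_le

theorem measurable_pastSigma {r t : ι} (hrt : r < t) : Measurable[pastSigma u t] (u r) :=
  Measurable.of_comap_le (le_iSup (fun s : {s : ι // s < t} =>
    MeasurableSpace.comap (u s) inferInstance) ⟨r, hrt⟩)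

end General

section FourthMoments

variable {Ω : Type*} [MeasurableSpace Ω] {μ : Measure Ω} {d : ℕ} {u : ℤ → Ω → Fin d → ℝ}

def HasIntegrableFourthProducts (μ : Measure Ω) (u : ℤ → Ω → Fin d → ℝ) : Prop :=
  ∀ (t₁ t₂ t₃ t₄ : ℤ) (i j a b : Fin d),
    Integrable (fun ω => u t₁ ω i * u t₂ ω j * u t₃ ω a * u t₄ ω b) μ

def IsMartingaleDifference (μ : Measure Ω) (u : ℤ → Ω → Fin d → ℝ) : Prop :=
  ∀ t i, μ[(fun ω => u t ω i) | pastSigma u t] =ᵐ[μ] 0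


theorem integral_mul_eq_zero_of_lt [IsProbabilityMeasure μ]
    (hmeas : ∀ t i, Measurable fun ω => u t ω i) (hint4 : HasIntegrableFourthProducts μ u)
    (hmds : IsMartingaleDifference μ u) {t₁ t₂ t₃ s : ℤ} (h₁ : t₁ < s) (h₂ : t₂ < s)
    (h₃ : t₃ < s) (i₁ i₂ i₃ b : Fin d) :
    ∫ ω, u t₁ ω i₁ * u t₂ ω i₂ * u t₃ ω i₃ * u s ω b ∂μ = 0 := by
  have hpast : ∀ {r}, r < s → ∀ k, Measurable[pastSigma u s] fun ω => u r ω k :=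
    fun hr k => (measurable_pi_apply k).comp (measurable_pastSigma hr)
  have hus : Integrable (fun ω => u s ω b) μ :=
    integrable_of_integrable_pow_four (hmeas s b).aestronglyMeasurable <| by
      simpa only [pow_succ, pow_zero, one_mul] using hint4 s s s s b b b b
  exact integral_mul_eq_zero_of_condExp_eq_zero
    (pastSigma_le (fun r => measurable_pi_iff.mpr (hmeas r)) s)
    (((hpast h₁ i₁).mul (hpast h₂ i₂)).mul (hpast h₃ i₃)).stronglyMeasurable
    (hint4 t₁ t₂ t₃ s i₁ i₂ i₃ b) hus (hmds s b)

theorem integral_fourth_product_eq_zero [IsProbabilityMeasure μ]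
    (hmeas : ∀ t i, Measurable fun ω => u t ω i) (hint4 : HasIntegrableFourthProducts μ u)
    (hmds : IsMartingaleDifference μ u)
    (hfourth : ∀ t τ : ℤ, t < τ → ∀ k : ℤ, 0 < k → ∀ i j a b : Fin d,
      ∫ ω, u t ω i * u τ ω j * (u (τ + k) ω a * u (τ + k) ω b) ∂μ = 0)
    {t τ s₁ s₂ : ℤ} (htτ : t < τ) (hs₁ : t < s₁) (hs₂ : τ < s₂) (n₁ i n₂ j : Fin d) :
    ∫ ω, u s₁ ω n₁ * u t ω i * u s₂ ω n₂ * u τ ω j ∂μ = 0 := by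
  rcases lt_trichotomy s₁ s₂ with hlt | rfl | hgt
  · simpa only [mul_right_comm _ (u s₂ _ n₂)] using
      integral_mul_eq_zero_of_lt hmeas hint4 hmds hlt (htτ.trans hs₂) hs₂ n₁ i j n₂
  · have h := hfourth t τ htτ (s₁ - τ) (by omega) i j n₁ n₂
    rw [add_sub_cancel] at h
    rw [← h]
    congr 1 with ω
    ring
  · have h := integral_mul_eq_zero_of_lt hmeas hint4 hmds hs₁ hgt (hs₂.trans hgt) i n₂ j n₁
    rw [← h]
    congr 1 with ω
    ring

theorem integral_sum_mul_sum_eq_zero [IsProbabilityMeasure μ]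
    (hmeas : ∀ t i, Measurable fun ω => u t ω i) (hint4 : HasIntegrableFourthProducts μ u)
    (hmds : IsMartingaleDifference μ u)
    (hfourth : ∀ t τ : ℤ, t < τ → ∀ k : ℤ, 0 < k → ∀ i j a b : Fin d,
      ∫ ω, u t ω i * u τ ω j * (u (τ + k) ω a * u (τ + k) ω b) ∂μ = 0)
    {κ κ' : Type*} (K : Finset κ) (K' : Finset κ') (c : κ → ℝ) (c' : κ' → ℝ)
    (σ : κ → ℤ) (σ' : κ' → ℤ) (n : κ → Fin d) (n' : κ' → Fin d)
    {t τ : ℤ} (htτ : t < τ) (hσ : ∀ x ∈ K, t < σ x) (hσ' : ∀ y ∈ K', τ < σ' y) (i j : Fin d) :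
    ∫ ω, (∑ x ∈ K, c x * u (σ x) ω (n x)) * u t ω i *
      ((∑ y ∈ K', c' y * u (σ' y) ω (n' y)) * u τ ω j) ∂μ = 0 := by
  have hexpand : ∀ ω, (∑ x ∈ K, c x * u (σ x) ω (n x)) * u t ω i *
      ((∑ y ∈ K', c' y * u (σ' y) ω (n' y)) * u τ ω j) =
      ∑ x ∈ K, ∑ y ∈ K', c x * c' y *
        (u (σ x) ω (n x) * u t ω i * u (σ' y) ω (n' y) * u τ ω j) := fun ω => by
    rw [Finset.sum_mul, Finset.sum_mul]
    refine Finset.sum_congr rfl fun x _ => ?_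
    rw [Finset.sum_mul, Finset.mul_sum]
    exact Finset.sum_congr rfl fun y _ => by ring
  simp_rw [hexpand]
  rw [integral_finsetSum _ fun x _ =>
    integrable_finsetSum _ fun y _ => (hint4 _ _ _ _ _ _ _ _).const_mul _]
  refine Finset.sum_eq_zero fun x hx => ?_
  rw [integral_finsetSum _ fun y _ => (hint4 _ _ _ _ _ _ _ _).const_mul _]
  refine Finset.sum_eq_zero fun y hy => ?_
  rw [integral_const_mul, integral_fourth_product_eq_zero hmeas hint4 hmds hfourth htτ
    (hσ x hx) (hσ' y hy), mul_zero]

end FourthMoments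

theorem sum_dotProduct_mulVec {ι m n R : Type*} [Fintype m] [Fintype n] [NonUnitalSemiring R]
    (s : Finset ι) (v : m → R) (Ψ : ι → Matrix m n R) (w : ι → n → R) :
    ∑ k ∈ s, v ⬝ᵥ (Ψ k *ᵥ w k) = ∑ x ∈ s ×ˢ Finset.univ, (v ᵥ* Ψ x.1) x.2 * w x.1 x.2 := by
  simp_rw [dotProduct_mulVec, Finset.sum_product, dotProduct]

theorem score_process_serially_uncorrelated_general
    {Ω : Type*} [MeasurableSpace Ω] (μ : Measure Ω) [IsProbabilityMeasure μ]
    {d : ℕ} (u : ℤ → Ω → Fin d → ℝ)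
    (hmeas : ∀ t i, Measurable fun ω => u t ω i)
    (hint4 : ∀ (t₁ t₂ t₃ t₄ : ℤ) (i j a b : Fin d),
      Integrable (fun ω => u t₁ ω i * u t₂ ω j * u t₃ ω a * u t₄ ω b) μ)
    (hmds : ∀ t : ℤ, ∀ i : Fin d,
      μ[(fun ω => u t ω i) |
        ⨆ s : {s : ℤ // s < t}, MeasurableSpace.comap (u s) inferInstance] =ᵐ[μ] 0)
    (hfourth : ∀ t τ : ℤ, t < τ → ∀ k : ℤ, 0 < k → ∀ i j a b : Fin d,
      ∫ ω, u t ω i * u τ ω j * (u (τ + k) ω a * u (τ + k) ω b) ∂μ = 0)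
    (h p : ℕ)
    (v₁ : Fin d → ℝ) (Ψ : ℕ → Matrix (Fin d) (Fin d) ℝ)
    (e : ℤ → Ω → ℝ)
    (he : ∀ t ω, e t ω =
      ∑ i ∈ Finset.range h, v₁ ⬝ᵥ (Ψ i).mulVec (u (t + (h : ℤ) - (i : ℤ)) ω)) :
    ∀ t τ : ℤ, t ≠ τ → ∀ (a b : Fin p) (i j : Fin d),
      ∫ ω, (e (t + (a : ℤ)) ω * u t ω i) * (e (τ + (b : ℤ)) ω * u τ ω j) ∂μ = 0 := by
  intro t τ hne a b i j
  wlog htτ : t < τ generalizing t τ a b i j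
  · simpa only [mul_comm (e (τ + b) _ * _)] using
      this τ t hne.symm b a j i (lt_of_le_of_ne (not_lt.mp htτ) hne.symm)
  simp_rw [he, sum_dotProduct_mulVec]
  refine integral_sum_mul_sum_eq_zero hmeas hint4 hmds hfourth _ _ _ _ _ _ _ _ htτ ?_ ?_ i j
  all_goals
    intro x hx
    have hk := Finset.mem_range.mp (Finset.mem_product.mp hx).1
    omega

/-- For a martingale difference sequence `(u_t)` satisfying the fourth-moment
restriction, with `e_{t,h} = Σ_{i=0}^{h−1} v₁' Ψ_i u_{t+h−i}`, the process
`s_t = (e_{t,h}, …, e_{t+p−1,h}) ⊗ u_t` is serially uncorrelated: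
`E[s_t s_τ'] = 0` for all `t ≠ τ` (stated entrywise). -/
theorem score_process_serially_uncorrelated
    {Ω : Type*} [MeasurableSpace Ω] (μ : Measure Ω) [IsProbabilityMeasure μ]
    {d : ℕ} (u : ℤ → Ω → Fin d → ℝ)
    (hmeas : ∀ t i, Measurable fun ω => u t ω i)
    (hint4 : ∀ (t₁ t₂ t₃ t₄ : ℤ) (i j a b : Fin d),
      Integrable (fun ω => u t₁ ω i * u t₂ ω j * u t₃ ω a * u t₄ ω b) μ)
    (hmds : ∀ t : ℤ, ∀ i : Fin d,
      μ[(fun ω => u t ω i) |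
        ⨆ s : {s : ℤ // s < t}, MeasurableSpace.comap (u s) inferInstance] =ᵐ[μ] 0)
    (hfourth : ∀ t τ : ℤ, t < τ → ∀ k : ℤ, 0 < k → ∀ i j a b : Fin d,
      ∫ ω, u t ω i * u τ ω j * (u (τ + k) ω a * u (τ + k) ω b) ∂μ = 0)
    (h p : ℕ) (hh : 1 ≤ h) (hp : 1 ≤ p)
    (v₁ : Fin d → ℝ) (Ψ : ℕ → Matrix (Fin d) (Fin d) ℝ)
    (e : ℤ → Ω → ℝ)
    (he : ∀ t ω, e t ω =
      ∑ i ∈ Finset.range h, v₁ ⬝ᵥ (Ψ i).mulVec (u (t + (h : ℤ) - (i : ℤ)) ω)) :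
    ∀ t τ : ℤ, t ≠ τ → ∀ (a b : Fin p) (i j : Fin d),
      ∫ ω, (e (t + (a : ℤ)) ω * u t ω i) * (e (τ + (b : ℤ)) ω * u τ ω j) ∂μ = 0 :=
  score_process_serially_uncorrelated_general μ u hmeas hint4 hmds hfourth h p v₁ Ψ e he
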